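/- (Generalized Ky Fan majorization theorem.) Let 𝔥 be a Euclidean space with spectral decomposition system (𝒳, S, γ, (Λ_a)_{a∈A}), let (X_i)_{1≤i≤m} be a finite family in 𝔥, and let (α_i)_{1≤i≤m} be a family of nonnegative reals. Then γ(Σ_{i=1}^m α_i X_i) belongs to the convex hull of the orbit S • (Σ_{i=1}^m α_i γ(X_i)). -/

import Mathlib

open scoped InnerProductSpace

/-- A spectral decomposition system `(𝓧, S, γ, (Λ a)_{a ∈ A})` for a Euclidean space `𝓗`,
with spectral-induced ordering mapping `τ`. -/
structure SpectralDecompositionSystem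
    (𝓗 : Type*) (𝓧 : Type*) [NormedAddCommGroup 𝓗] [InnerProductSpace ℝ 𝓗]
    [NormedAddCommGroup 𝓧] [InnerProductSpace ℝ 𝓧]
    (S : Type*) [Group S] [MulAction S 𝓧]
    {A : Type*} (γ : 𝓗 → 𝓧) (Λ : A → 𝓧 →ₗ[ℝ] 𝓗) (τ : 𝓧 → 𝓧) : Prop where
  /-- `S` acts on `𝓧` by linear maps. -/
  smul_add_smul : ∀ (s : S) (c : ℝ) (x y : 𝓧), s • (c • x + y) = c • (s • x) + s • y
  /-- `S` acts on `𝓧` by isometries. -/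
  norm_smul : ∀ (s : S) (x : 𝓧), ‖s • x‖ = ‖x‖
  /-- Each `Λ a` is a (linear) isometry. -/
  norm_lambda : ∀ (a : A) (x : 𝓧), ‖Λ a x‖ = ‖x‖
  /-- `τ` is `S`-invariant. -/
  tau_smul : ∀ (s : S) (x : 𝓧), τ (s • x) = τ x
  /-- `τ x` belongs to the orbit `S • x`. -/
  tau_orbit : ∀ x : 𝓧, ∃ s : S, τ x = s • x
  /-- `γ ∘ Λ a = τ` for all `a ∈ A`. -/
  gamma_lambda : ∀ (a : A) (x : 𝓧), γ (Λ a x) = τ x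
  /-- Every element of `𝓗` admits a spectral decomposition. -/
  exists_decomp : ∀ Z : 𝓗, ∃ a : A, Z = Λ a (γ Z)
  /-- Von Neumann-type trace inequality. -/
  inner_le : ∀ Z W : 𝓗, ⟪Z, W⟫_ℝ ≤ ⟪γ Z, γ W⟫_ℝ

variable {𝓗 𝓧 : Type*} [NormedAddCommGroup 𝓗] [InnerProductSpace ℝ 𝓗]
  [FiniteDimensional ℝ 𝓗] [NormedAddCommGroup 𝓧] [InnerProductSpace ℝ 𝓧]
  [FiniteDimensional ℝ 𝓧] {S : Type*} [Group S] [MulAction S 𝓧]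
  {A : Type*} [Nonempty A]

/-!
The orbit `S • v` of `v = ∑ αᵢ • γ Xᵢ` is the fibre `τ⁻¹ {τ v}` of the 1-Lipschitz map `τ`, hence
compact, so its convex hull is closed and, by Hahn–Banach, it suffices to dominate the support
function of `γ Z`, `Z = ∑ αᵢ • Xᵢ`. Given a direction `w`, pick `s` with `τ w = s • w` and `a` with
`Z = Λ a (γ Z)`. Two uses of the trace inequality and `γ ∘ Λ a = τ` give
`⟪γ Z, w⟫ ≤ ⟪γ Z, τ w⟫ = ⟪Z, Λ a (τ w)⟫ ≤ ∑ αᵢ ⟪γ Xᵢ, τ w⟫ = ⟪s⁻¹ • v, w⟫`.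
-/

open Set Module

/-- Carathéodory: every point of the hull is a convex combination of `finrank ℝ E + 1` points of
`s`, after padding with zero weights at `x₀`. -/

theorem convexHull_subset_image_stdSimplex {E : Type*} [NormedAddCommGroup E] [NormedSpace ℝ E]
    [FiniteDimensional ℝ E] {s : Set E} {x₀ : E} (hx₀ : x₀ ∈ s) :
    convexHull ℝ s ⊆ (fun p : (Fin (finrank ℝ E + 1) → ℝ) × (Fin (finrank ℝ E + 1) → E) =>
      ∑ j, p.1 j • p.2 j) '' (stdSimplex ℝ _ ×ˢ univ.pi fun _ => s) := by
  intro x hx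
  obtain ⟨ι, _, z, w, hzs, hz, hw₀, hw₁, rfl⟩ := eq_pos_convex_span_of_mem_convexHull hx
  have hcard : Fintype.card ι ≤ Fintype.card (Fin (finrank ℝ E + 1)) := by
    simpa using hz.card_le_finrank_succ.trans (Nat.succ_le_succ (Submodule.finrank_le _))
  obtain ⟨e⟩ := Function.Embedding.nonempty_of_card_le hcard
  set w' := Function.extend e w 0
  set z' := Function.extend e z fun _ => x₀
  have hw' (j) (hj : j ∉ range e) : w' j = 0 := Function.extend_apply' _ _ _ (by simpa using hj)
  refine ⟨(w', z'), ⟨⟨fun j => ?_, ?_⟩, fun j _ => ?_⟩, ?_⟩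
  · by_cases hj : j ∈ range e
    · obtain ⟨i, rfl⟩ := hj
      simpa [w', e.injective.extend_apply] using (hw₀ i).le
    · simp [hw' j hj]
  · rw [← hw₁]
    exact (Fintype.sum_of_injective e e.injective w w' hw'
      fun i => (e.injective.extend_apply ..).symm).symm
  · by_cases hj : j ∈ range e
    · obtain ⟨i, rfl⟩ := hj
      simpa [z', e.injective.extend_apply] using hzs (mem_range_self i)
    · simpa [z', Function.extend_apply' _ _ _ (by simpa using hj)] using hx₀
  · refine (Fintype.sum_of_injective e e.injective _ _ (fun j hj => by simp [hw' j hj])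
      fun i => ?_).symm
    simp [w', z', e.injective.extend_apply]

theorem isCompact_convexHull {E : Type*} [NormedAddCommGroup E] [NormedSpace ℝ E]
    [FiniteDimensional ℝ E] {s : Set E} (hs : IsCompact s) : IsCompact (convexHull ℝ s) := by
  rcases s.eq_empty_or_nonempty with rfl | ⟨x₀, hx₀⟩
  · simp
  have hsum : (fun p : (Fin (finrank ℝ E + 1) → ℝ) × (Fin (finrank ℝ E + 1) → E) =>
      ∑ j, p.1 j • p.2 j) '' (stdSimplex ℝ _ ×ˢ univ.pi fun _ => s) ⊆ convexHull ℝ s := by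
    rintro _ ⟨⟨w, z⟩, ⟨hw, hz⟩, rfl⟩
    exact (convex_convexHull ℝ s).sum_mem (fun j _ => hw.1 j) hw.2
      fun j _ => subset_convexHull ℝ s (hz j (mem_univ j))
  rw [(convexHull_subset_image_stdSimplex hx₀).antisymm hsum]
  exact ((isCompact_stdSimplex ℝ _).prod (isCompact_univ_pi fun _ => hs)).image (by fun_prop)

theorem mem_convexHull_of_forall_exists_inner_le {E : Type*} [NormedAddCommGroup E]
    [InnerProductSpace ℝ E] [CompleteSpace E] {s : Set E} {x : E}
    (hs : IsClosed (convexHull ℝ s)) (h : ∀ w, ∃ c ∈ s, ⟪x, w⟫_ℝ ≤ ⟪c, w⟫_ℝ) :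
    x ∈ convexHull ℝ s := by
  by_contra hx
  obtain ⟨f, r, hfs, hrx⟩ := geometric_hahn_banach_closed_point (convex_convexHull ℝ s) hs hx
  obtain ⟨c, hc, hle⟩ := h ((InnerProductSpace.toDual ℝ E).symm f)
  rw [real_inner_comm _ x, real_inner_comm _ c, InnerProductSpace.toDual_symm_apply,
    InnerProductSpace.toDual_symm_apply] at hle
  linarith [hfs c (subset_convexHull ℝ s hc)]

namespace SpectralDecompositionSystem

variable {𝓗 𝓧 : Type*} [NormedAddCommGroup 𝓗] [InnerProductSpace ℝ 𝓗]
  [NormedAddCommGroup 𝓧] [InnerProductSpace ℝ 𝓧]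
  {S : Type*} [Group S] [MulAction S 𝓧]
  {A : Type*} {γ : 𝓗 → 𝓧} {Λ : A → 𝓧 →ₗ[ℝ] 𝓗} {τ : 𝓧 → 𝓧}

lemma nonempty_index (h : SpectralDecompositionSystem 𝓗 𝓧 S γ Λ τ) : Nonempty A :=
  ⟨(h.exists_decomp 0).choose⟩

def smulLinearIsometry (h : SpectralDecompositionSystem 𝓗 𝓧 S γ Λ τ) (s : S) :
    𝓧 →ₗᵢ[ℝ] 𝓧 where
  toFun x := s • x
  map_add' x y := by simpa using h.smul_add_smul s 1 x y
  map_smul' c x := by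
    have hs0 : s • (0 : 𝓧) = 0 := norm_eq_zero.mp ((h.norm_smul s 0).trans norm_zero)
    simpa [hs0] using h.smul_add_smul s c x 0
  norm_map' := h.norm_smul s

lemma inner_smul_smul (h : SpectralDecompositionSystem 𝓗 𝓧 S γ Λ τ) (s : S) (x y : 𝓧) :
    ⟪s • x, s • y⟫_ℝ = ⟪x, y⟫_ℝ :=
  (h.smulLinearIsometry s).inner_map_map x y

lemma inner_lambda_lambda (h : SpectralDecompositionSystem 𝓗 𝓧 S γ Λ τ) (a : A) (x y : 𝓧) :
    ⟪Λ a x, Λ a y⟫_ℝ = ⟪x, y⟫_ℝ :=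
  LinearIsometry.inner_map_map ⟨Λ a, h.norm_lambda a⟩ x y

lemma inner_le_inner_tau (h : SpectralDecompositionSystem 𝓗 𝓧 S γ Λ τ) (x y : 𝓧) :
    ⟪x, y⟫_ℝ ≤ ⟪τ x, τ y⟫_ℝ := by
  obtain ⟨a⟩ := h.nonempty_index
  calc ⟪x, y⟫_ℝ = ⟪Λ a x, Λ a y⟫_ℝ := (h.inner_lambda_lambda a x y).symm
    _ ≤ ⟪γ (Λ a x), γ (Λ a y)⟫_ℝ := h.inner_le _ _
    _ = ⟪τ x, τ y⟫_ℝ := by rw [h.gamma_lambda, h.gamma_lambda]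

lemma norm_tau (h : SpectralDecompositionSystem 𝓗 𝓧 S γ Λ τ) (x : 𝓧) : ‖τ x‖ = ‖x‖ := by
  obtain ⟨s, hs⟩ := h.tau_orbit x
  rw [hs, h.norm_smul]

lemma tau_tau (h : SpectralDecompositionSystem 𝓗 𝓧 S γ Λ τ) (x : 𝓧) : τ (τ x) = τ x := by
  obtain ⟨s, hs⟩ := h.tau_orbit x
  rw [hs, h.tau_smul, hs]

lemma tau_gamma (h : SpectralDecompositionSystem 𝓗 𝓧 S γ Λ τ) (Z : 𝓗) : τ (γ Z) = γ Z := by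
  obtain ⟨a, ha⟩ := h.exists_decomp Z
  rw [ha, h.gamma_lambda, h.tau_tau]

lemma lipschitzWith_one_tau (h : SpectralDecompositionSystem 𝓗 𝓧 S γ Λ τ) :
    LipschitzWith 1 τ := by
  refine LipschitzWith.of_dist_le_mul fun x y => ?_
  rw [dist_eq_norm, dist_eq_norm, NNReal.coe_one, one_mul]
  refine le_of_sq_le_sq ?_ (norm_nonneg _)
  rw [norm_sub_sq_real, norm_sub_sq_real, h.norm_tau, h.norm_tau]
  linarith [h.inner_le_inner_tau x y]

lemma isClosed_orbit (h : SpectralDecompositionSystem 𝓗 𝓧 S γ Λ τ) (v : 𝓧) :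
    IsClosed (MulAction.orbit S v) := by
  have hfiber : MulAction.orbit S v = τ ⁻¹' {τ v} := by
    ext x
    refine ⟨?_, fun hx => ?_⟩
    · rintro ⟨s, rfl⟩
      exact h.tau_smul s v
    · obtain ⟨s, hs⟩ := h.tau_orbit x
      obtain ⟨t, ht⟩ := h.tau_orbit v
      refine ⟨s⁻¹ * t, ?_⟩
      change (s⁻¹ * t) • v = x
      rw [mul_smul, ← ht, ← hx, hs, inv_smul_smul]
  rw [hfiber]
  exact isClosed_singleton.preimage h.lipschitzWith_one_tau.continuous

lemma isCompact_orbit [FiniteDimensional ℝ 𝓧] (h : SpectralDecompositionSystem 𝓗 𝓧 S γ Λ τ)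
    (v : 𝓧) : IsCompact (MulAction.orbit S v) := by
  refine Metric.isCompact_of_isClosed_isBounded (h.isClosed_orbit v)
    ((Metric.isBounded_closedBall (x := 0) (r := ‖v‖)).subset ?_)
  rintro _ ⟨s, rfl⟩
  simp [h.norm_smul]

lemma inner_gamma_le_inner_tau (h : SpectralDecompositionSystem 𝓗 𝓧 S γ Λ τ) (Z : 𝓗) (w : 𝓧) :
    ⟪γ Z, w⟫_ℝ ≤ ⟪γ Z, τ w⟫_ℝ := by
  simpa only [h.tau_gamma] using h.inner_le_inner_tau (γ Z) w

lemma exists_gamma_eq_tau_inner_eq (h : SpectralDecompositionSystem 𝓗 𝓧 S γ Λ τ) (Z : 𝓗)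
    (w : 𝓧) : ∃ Y, γ Y = τ w ∧ ⟪Z, Y⟫_ℝ = ⟪γ Z, τ w⟫_ℝ := by
  obtain ⟨a, ha⟩ := h.exists_decomp Z
  refine ⟨Λ a (τ w), by rw [h.gamma_lambda, h.tau_tau], ?_⟩
  conv_lhs => rw [ha]
  exact h.inner_lambda_lambda a _ _

lemma inner_sum_le (h : SpectralDecompositionSystem 𝓗 𝓧 S γ Λ τ) {ι : Type*} (t : Finset ι)
    (X : ι → 𝓗) {α : ι → ℝ} (hα : ∀ i ∈ t, 0 ≤ α i) (Y : 𝓗) :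
    ⟪∑ i ∈ t, α i • X i, Y⟫_ℝ ≤ ⟪∑ i ∈ t, α i • γ (X i), γ Y⟫_ℝ := by
  simp only [sum_inner, real_inner_smul_left]
  exact Finset.sum_le_sum fun i hi => mul_le_mul_of_nonneg_left (h.inner_le _ _) (hα i hi)

lemma exists_mem_orbit_inner_tau_eq (h : SpectralDecompositionSystem 𝓗 𝓧 S γ Λ τ) (v w : 𝓧) :
    ∃ c ∈ MulAction.orbit S v, ⟪v, τ w⟫_ℝ = ⟪c, w⟫_ℝ := by
  obtain ⟨s, hs⟩ := h.tau_orbit w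
  refine ⟨s⁻¹ • v, MulAction.mem_orbit v s⁻¹, ?_⟩
  rw [hs, ← h.inner_smul_smul s (s⁻¹ • v) w, smul_inv_smul]

lemma exists_mem_orbit_inner_gamma_sum_le (h : SpectralDecompositionSystem 𝓗 𝓧 S γ Λ τ)
    {ι : Type*} (t : Finset ι) (X : ι → 𝓗) {α : ι → ℝ} (hα : ∀ i ∈ t, 0 ≤ α i) (w : 𝓧) :
    ∃ c ∈ MulAction.orbit S (∑ i ∈ t, α i • γ (X i)),
      ⟪γ (∑ i ∈ t, α i • X i), w⟫_ℝ ≤ ⟪c, w⟫_ℝ := by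
  obtain ⟨Y, hY, hinner⟩ := h.exists_gamma_eq_tau_inner_eq (∑ i ∈ t, α i • X i) w
  obtain ⟨c, hc, hvc⟩ := h.exists_mem_orbit_inner_tau_eq (∑ i ∈ t, α i • γ (X i)) w
  refine ⟨c, hc, ?_⟩
  calc ⟪γ (∑ i ∈ t, α i • X i), w⟫_ℝ ≤ ⟪γ (∑ i ∈ t, α i • X i), τ w⟫_ℝ :=
        h.inner_gamma_le_inner_tau _ w
    _ = ⟪∑ i ∈ t, α i • X i, Y⟫_ℝ := hinner.symm
    _ ≤ ⟪∑ i ∈ t, α i • γ (X i), γ Y⟫_ℝ := h.inner_sum_le t X hα Y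
    _ = ⟪c, w⟫_ℝ := by rw [hY, hvc]

end SpectralDecompositionSystem

set_option linter.unusedSectionVars false in
/-- Generalized Ky Fan majorization theorem. -/
theorem kyFan_majorization
    (γ : 𝓗 → 𝓧) (Λ : A → 𝓧 →ₗ[ℝ] 𝓗) (τ : 𝓧 → 𝓧)
    (hsys : SpectralDecompositionSystem 𝓗 𝓧 S γ Λ τ)
    (m : ℕ) (Xf : Fin m → 𝓗) (α : Fin m → ℝ) (hα : ∀ i, 0 ≤ α i) :
    γ (∑ i, α i • Xf i) ∈
      convexHull ℝ (MulAction.orbit S (∑ i, α i • γ (Xf i))) :=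
  mem_convexHull_of_forall_exists_inner_le
    (isCompact_convexHull (hsys.isCompact_orbit _)).isClosed
    (hsys.exists_mem_orbit_inner_gamma_sum_le Finset.univ Xf fun i _ => hα i)
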